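/- arXiv:2311.03811 — 4 statements merged into one kernel-verified Lean document; each statement's English description precedes it below -/
import Mathlib

section
/- Under the hypotheses of the previous pointwise inequality, summing over test points i: if E[Σ_i (s²_i − α)1{δ_OR^i = 1} + (s¹_i − α)1{δ_OR^i = 2}] = 0 and E[Σ_i (s²_i − α)1{δ^i = 1} + (s¹_i − α)1{δ^i = 2}] ≤ 0, and λ ≥ 0, then λ·(ETS_{δ_OR} − ETS_δ) ≥ 0, where ETS_δ = E[Σ_i s¹_i 1{δ^i = 1} + s²_i 1{δ^i = 2}]. Hence if λ > 0 the oracle rule maximizes ETS among rules with mFSR ≤ α. -/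
open MeasureTheory

/-- Theorem 1, optimality of the oracle rule: combining the mFSR constraints with the
pointwise Neyman–Pearson inequalities yields `λ·(ETS_OR − ETS_δ) ≥ 0`; hence for `λ > 0`
the oracle rule maximizes ETS among rules with mFSR ≤ α. -/
theorem oracle_maximizes_ETS {Ω : Type*} [MeasurableSpace Ω] (μ : Measure Ω)
    [IsProbabilityMeasure μ] (m : ℕ) (s1 s2 : Fin m → Ω → ℝ)
    (δOR δ : Fin m → Ω → ℕ) (α lam : ℝ) (hlam : 0 ≤ lam)
    (hint_fOR : Integrable (fun ω => ∑ i,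
      ((s2 i ω - α) * (if δOR i ω = 1 then (1:ℝ) else 0) +
        (s1 i ω - α) * (if δOR i ω = 2 then (1:ℝ) else 0))) μ)
    (hint_fδ : Integrable (fun ω => ∑ i,
      ((s2 i ω - α) * (if δ i ω = 1 then (1:ℝ) else 0) +
        (s1 i ω - α) * (if δ i ω = 2 then (1:ℝ) else 0))) μ)
    (hint_etsOR : Integrable (fun ω => ∑ i,
      (s1 i ω * (if δOR i ω = 1 then (1:ℝ) else 0) +
        s2 i ω * (if δOR i ω = 2 then (1:ℝ) else 0))) μ)
    (hint_ets : Integrable (fun ω => ∑ i,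
      (s1 i ω * (if δ i ω = 1 then (1:ℝ) else 0) +
        s2 i ω * (if δ i ω = 2 then (1:ℝ) else 0))) μ)
    (hOR_eq : (∫ ω, (∑ i,
      ((s2 i ω - α) * (if δOR i ω = 1 then (1:ℝ) else 0) +
        (s1 i ω - α) * (if δOR i ω = 2 then (1:ℝ) else 0))) ∂μ) = 0)
    (hδ_le : (∫ ω, (∑ i,
      ((s2 i ω - α) * (if δ i ω = 1 then (1:ℝ) else 0) +
        (s1 i ω - α) * (if δ i ω = 2 then (1:ℝ) else 0))) ∂μ) ≤ 0)
    (hpt1 : ∀ i ω,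
      ((if δOR i ω = 1 then (1:ℝ) else 0) - (if δ i ω = 1 then 1 else 0)) *
        (s2 i ω - α - lam * s1 i ω) ≤ 0)
    (hpt2 : ∀ i ω,
      ((if δOR i ω = 2 then (1:ℝ) else 0) - (if δ i ω = 2 then 1 else 0)) *
        (s1 i ω - α - lam * s2 i ω) ≤ 0) :
    0 ≤ lam * ((∫ ω, (∑ i,
        (s1 i ω * (if δOR i ω = 1 then (1:ℝ) else 0) +
          s2 i ω * (if δOR i ω = 2 then (1:ℝ) else 0))) ∂μ) -
      (∫ ω, (∑ i,
        (s1 i ω * (if δ i ω = 1 then (1:ℝ) else 0) +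
          s2 i ω * (if δ i ω = 2 then (1:ℝ) else 0))) ∂μ)) ∧
    (0 < lam →
      (∫ ω, (∑ i,
        (s1 i ω * (if δ i ω = 1 then (1:ℝ) else 0) +
          s2 i ω * (if δ i ω = 2 then (1:ℝ) else 0))) ∂μ) ≤
      (∫ ω, (∑ i,
        (s1 i ω * (if δOR i ω = 1 then (1:ℝ) else 0) +
          s2 i ω * (if δOR i ω = 2 then (1:ℝ) else 0))) ∂μ)) := by

  have key : (∫ ω, ((∑ i,
      ((s2 i ω - α) * (if δOR i ω = 1 then (1:ℝ) else 0) +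
        (s1 i ω - α) * (if δOR i ω = 2 then (1:ℝ) else 0))) -
      (∑ i,
      ((s2 i ω - α) * (if δ i ω = 1 then (1:ℝ) else 0) +
        (s1 i ω - α) * (if δ i ω = 2 then (1:ℝ) else 0))) -
      lam * ((∑ i,
      (s1 i ω * (if δOR i ω = 1 then (1:ℝ) else 0) +
        s2 i ω * (if δOR i ω = 2 then (1:ℝ) else 0))) -
      (∑ i,
      (s1 i ω * (if δ i ω = 1 then (1:ℝ) else 0) +
        s2 i ω * (if δ i ω = 2 then (1:ℝ) else 0))))) ∂μ) ≤ 0 := by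
    apply integral_nonpos
    intro ω
    simp only [Pi.zero_apply]
    have heq : (∑ i,
      ((s2 i ω - α) * (if δOR i ω = 1 then (1:ℝ) else 0) +
        (s1 i ω - α) * (if δOR i ω = 2 then (1:ℝ) else 0))) -
      (∑ i,
      ((s2 i ω - α) * (if δ i ω = 1 then (1:ℝ) else 0) +
        (s1 i ω - α) * (if δ i ω = 2 then (1:ℝ) else 0))) -
      lam * ((∑ i,
      (s1 i ω * (if δOR i ω = 1 then (1:ℝ) else 0) +
        s2 i ω * (if δOR i ω = 2 then (1:ℝ) else 0))) -
      (∑ i,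
      (s1 i ω * (if δ i ω = 1 then (1:ℝ) else 0) +
        s2 i ω * (if δ i ω = 2 then (1:ℝ) else 0)))) =
      ∑ i, (((if δOR i ω = 1 then (1:ℝ) else 0) - (if δ i ω = 1 then 1 else 0)) *
        (s2 i ω - α - lam * s1 i ω) +
        ((if δOR i ω = 2 then (1:ℝ) else 0) - (if δ i ω = 2 then 1 else 0)) *
        (s1 i ω - α - lam * s2 i ω)) := by
      rw [← Finset.sum_sub_distrib, ← Finset.sum_sub_distrib, Finset.mul_sum,
        ← Finset.sum_sub_distrib]
      exact Finset.sum_congr rfl (fun i _ => by ring)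
    rw [heq]
    exact Finset.sum_nonpos (fun i _ => add_nonpos (hpt1 i ω) (hpt2 i ω))
  rw [integral_sub
      (f := fun ω => (∑ i,
        ((s2 i ω - α) * (if δOR i ω = 1 then (1:ℝ) else 0) +
          (s1 i ω - α) * (if δOR i ω = 2 then (1:ℝ) else 0))) -
        (∑ i,
        ((s2 i ω - α) * (if δ i ω = 1 then (1:ℝ) else 0) +
          (s1 i ω - α) * (if δ i ω = 2 then (1:ℝ) else 0))))
      (g := fun ω => lam * ((∑ i,
        (s1 i ω * (if δOR i ω = 1 then (1:ℝ) else 0) +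
          s2 i ω * (if δOR i ω = 2 then (1:ℝ) else 0))) -
        (∑ i,
        (s1 i ω * (if δ i ω = 1 then (1:ℝ) else 0) +
          s2 i ω * (if δ i ω = 2 then (1:ℝ) else 0)))))
      (hint_fOR.sub hint_fδ) ((hint_etsOR.sub hint_ets).const_mul lam),
    integral_sub hint_fOR hint_fδ, integral_const_mul,
    integral_sub hint_etsOR hint_ets, hOR_eq] at key
  constructor
  · linarith
  · intro hpos
    have h1 : 0 ≤ lam * ((∫ ω, (∑ i,
        (s1 i ω * (if δOR i ω = 1 then (1:ℝ) else 0) +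
          s2 i ω * (if δOR i ω = 2 then (1:ℝ) else 0))) ∂μ) -
      (∫ ω, (∑ i,
        (s1 i ω * (if δ i ω = 1 then (1:ℝ) else 0) +
          s2 i ω * (if δ i ω = 2 then (1:ℝ) else 0))) ∂μ)) := by linarith
    nlinarith
end

section
/- Let τ be a stopping time for the backward filtration F_k with F_k = σ-algebra generated by the pairs (V_test(s_j), V_cal(s_j)) for j ≥ k, and let M_k = V_test(k)/(V_cal(k)+1) be the martingale from the misclassification mirror process with terminal value M_{k_max} = |W_test|/(|W_cal|+1). Then E[M_τ | D_cal, D_test] = |W_test|/(|W_cal|+1), where |W_test| and |W_cal| are the total numbers of misclassified test and calibration samples. -/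
open MeasureTheory

/-- Optional stopping for the bounded mirror martingale `V_test/(V_cal+1)`: the stopped
value, conditionally on the data (the initial σ-algebra), equals the terminal-threshold
value `|W_test|/(|W_cal|+1)`. -/
theorem stopped_mirror_martingale_condExp {Ω : Type*} {m0 : MeasurableSpace Ω}
    (μ : Measure Ω) [IsProbabilityMeasure μ] (ℱ : Filtration ℕ m0)
    (Mart : ℕ → Ω → ℝ) (hM : Martingale Mart ℱ μ)
    (Wtest Wcal : Ω → ℕ)
    (hM0 : Mart 0 = fun ω => (Wtest ω : ℝ) / ((Wcal ω : ℝ) + 1))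
    (τ : Ω → ℕ) (hτ : IsStoppingTime ℱ (fun ω => (τ ω : WithTop ℕ))) (N : ℕ) (hτN : ∀ ω, τ ω ≤ N)
    (C : ℝ) (hbdd : ∀ n ω, |Mart n ω| ≤ C) :
    μ[MeasureTheory.stoppedValue Mart (fun ω => (τ ω : WithTop ℕ)) | ℱ 0] =ᵐ[μ]
      fun ω => (Wtest ω : ℝ) / ((Wcal ω : ℝ) + 1) := by
  have hσ : IsStoppingTime ℱ (fun _ : Ω => (0 : ℕ)) := isStoppingTime_const ℱ 0
  have hsf : SigmaFinite (μ.trim hσ.measurableSpace_le) := by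
    infer_instance
  have h := hM.stoppedValue_ae_eq_condExp_of_le hτ hσ (fun ω => by simp) (fun ω => WithTop.coe_le_coe.mpr (hτN ω))
  have hms : hσ.measurableSpace = ℱ 0 := IsStoppingTime.measurableSpace_const ℱ 0
  rw [hms] at h
  refine h.symm.trans ?_
  have : stoppedValue Mart (fun _ : Ω => (0 : ℕ)) = Mart 0 := rfl
  rw [this, hM0]
end

section
/- Suppose the FSP decomposition gives FSR ≤ α·E[((n_cal+1)/n_test)·(|W_test|/(|W_cal|+1))] and the sample sizes are such that the sizes of the test and calibration sets are independent of the misclassification indicators. Then FSR ≤ α·E[(n_cal+1)/(|W_cal|+1)]·E[|W_test|/n_test] ≤ α·E[p_test/p_cal], where p_test = |W_test|/n_test and p_cal = |W_cal|/n_cal. -/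
open MeasureTheory ProbabilityTheory

/-- Theorem 2, final factorization step: under independence of the calibration-side and
test-side quantities, `FSR ≤ α·E[(n_cal+1)/(|W_cal|+1)]·E[|W_test|/n_test] ≤ α·E[p_test/p_cal]`. -/
theorem FSR_factorization_bound {Ω : Type*} [MeasurableSpace Ω] (μ : Measure Ω)
    [IsProbabilityMeasure μ] (FSR α : ℝ) (hα : 0 ≤ α)
    (Wtest Wcal ncal ntest : Ω → ℕ)
    (hWc_pos : ∀ ω, 0 < Wcal ω) (hWc_le : ∀ ω, Wcal ω ≤ ncal ω) (hnt : ∀ ω, 0 < ntest ω)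
    (hindep : IndepFun (fun ω => ((ncal ω : ℝ) + 1) / ((Wcal ω : ℝ) + 1))
      (fun ω => (Wtest ω : ℝ) / (ntest ω : ℝ)) μ)
    (hint1 : Integrable (fun ω => ((ncal ω : ℝ) + 1) / ((Wcal ω : ℝ) + 1)) μ)
    (hint2 : Integrable (fun ω => (Wtest ω : ℝ) / (ntest ω : ℝ)) μ)
    (hint3 : Integrable
      (fun ω => ((Wtest ω : ℝ) / (ntest ω : ℝ)) / ((Wcal ω : ℝ) / (ncal ω : ℝ))) μ)
    (hFSR : FSR ≤ α * ∫ ω,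
      (((ncal ω : ℝ) + 1) / (ntest ω : ℝ)) * ((Wtest ω : ℝ) / ((Wcal ω : ℝ) + 1)) ∂μ) :
    FSR ≤ α * (∫ ω, ((ncal ω : ℝ) + 1) / ((Wcal ω : ℝ) + 1) ∂μ) *
        (∫ ω, (Wtest ω : ℝ) / (ntest ω : ℝ) ∂μ) ∧
    α * (∫ ω, ((ncal ω : ℝ) + 1) / ((Wcal ω : ℝ) + 1) ∂μ) *
        (∫ ω, (Wtest ω : ℝ) / (ntest ω : ℝ) ∂μ) ≤
      α * ∫ ω, ((Wtest ω : ℝ) / (ntest ω : ℝ)) / ((Wcal ω : ℝ) / (ncal ω : ℝ)) ∂μ := by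
  have hmul := hindep.integral_mul_eq_mul_integral hint1.aestronglyMeasurable hint2.aestronglyMeasurable
  have heq : (fun ω => (((ncal ω : ℝ) + 1) / ((Wcal ω : ℝ) + 1)) * ((Wtest ω : ℝ) / (ntest ω : ℝ)))
      = fun ω => (((ncal ω : ℝ) + 1) / (ntest ω : ℝ)) * ((Wtest ω : ℝ) / ((Wcal ω : ℝ) + 1)) := by
    funext ω; field_simp
  have hintmul : Integrable (fun ω => (((ncal ω : ℝ) + 1) / ((Wcal ω : ℝ) + 1)) *
      ((Wtest ω : ℝ) / (ntest ω : ℝ))) μ := hindep.integrable_mul hint1 hint2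
  have hptwise : ∀ ω, (((ncal ω : ℝ) + 1) / ((Wcal ω : ℝ) + 1)) * ((Wtest ω : ℝ) / (ntest ω : ℝ))
      ≤ ((Wtest ω : ℝ) / (ntest ω : ℝ)) / ((Wcal ω : ℝ) / (ncal ω : ℝ)) := by
    intro ω
    have hwc : (0:ℝ) < Wcal ω := by exact_mod_cast hWc_pos ω
    have hnc : (0:ℝ) < ncal ω := lt_of_lt_of_le hwc (by exact_mod_cast hWc_le ω)
    have hle : ((Wcal ω : ℝ)) ≤ (ncal ω : ℝ) := by exact_mod_cast hWc_le ω
    have hg : (0:ℝ) ≤ (Wtest ω : ℝ) / (ntest ω : ℝ) := by positivity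
    have hf : (((ncal ω : ℝ) + 1) / ((Wcal ω : ℝ) + 1)) ≤ (ncal ω : ℝ) / (Wcal ω : ℝ) := by
      rw [div_le_div_iff₀ (by linarith) hwc]; nlinarith
    calc (((ncal ω : ℝ) + 1) / ((Wcal ω : ℝ) + 1)) * ((Wtest ω : ℝ) / (ntest ω : ℝ))
        ≤ ((ncal ω : ℝ) / (Wcal ω : ℝ)) * ((Wtest ω : ℝ) / (ntest ω : ℝ)) := by
          exact mul_le_mul_of_nonneg_right hf hg
      _ = ((Wtest ω : ℝ) / (ntest ω : ℝ)) / ((Wcal ω : ℝ) / (ncal ω : ℝ)) := by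
          field_simp
  constructor
  · calc FSR ≤ α * ∫ ω, (((ncal ω : ℝ) + 1) / (ntest ω : ℝ)) *
        ((Wtest ω : ℝ) / ((Wcal ω : ℝ) + 1)) ∂μ := hFSR
      _ = α * ∫ ω, (((ncal ω : ℝ) + 1) / ((Wcal ω : ℝ) + 1)) *
        ((Wtest ω : ℝ) / (ntest ω : ℝ)) ∂μ := by rw [heq]
      _ = α * ((∫ ω, ((ncal ω : ℝ) + 1) / ((Wcal ω : ℝ) + 1) ∂μ) *
        (∫ ω, (Wtest ω : ℝ) / (ntest ω : ℝ) ∂μ)) := by rw [show (fun ω => (((ncal ω : ℝ) + 1) / ((Wcal ω : ℝ) + 1)) *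
          ((Wtest ω : ℝ) / (ntest ω : ℝ))) = ((fun ω => ((ncal ω : ℝ) + 1) / ((Wcal ω : ℝ) + 1)) *
          fun ω => (Wtest ω : ℝ) / (ntest ω : ℝ)) from rfl, hmul]
      _ = _ := by ring
  · rw [mul_assoc, ← hmul, show ((fun ω => ((ncal ω : ℝ) + 1) / ((Wcal ω : ℝ) + 1)) *
      fun ω => (Wtest ω : ℝ) / (ntest ω : ℝ)) = (fun ω => (((ncal ω : ℝ) + 1) / ((Wcal ω : ℝ) + 1)) *
      ((Wtest ω : ℝ) / (ntest ω : ℝ))) from rfl]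
    exact mul_le_mul_of_nonneg_left (integral_mono hintmul hint3 hptwise) hα
end

section
/- Under the bijection F between the indecision method and the prediction-set method, if the indecision rule has mFSR = P(Ŷ ≠ Y | Ŷ ≠ 0) = α, test size n, and n_id indecisions, then the prediction-set miscoverage satisfies P(Y ∉ F(Ŷ)) = ((n − n_id)·α)/n; equivalently, the coverage is 1 − (n − n_id)·α/n. -/
open Finset in
/-- Appendix A, equation (tran): if the indecision rule has (empirical) mFSR `α`, test
size `n` and `n_id` indecisions, then the prediction-set miscoverage under the bijection
`F` equals `(n − n_id)·α/n`. -/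
theorem miscoverage_identity (n : ℕ) (hn : 0 < n) (Y Yhat : Fin n → ℕ)
    (hY : ∀ i, Y i = 1 ∨ Y i = 2)
    (hYhat : ∀ i, Yhat i = 0 ∨ Yhat i = 1 ∨ Yhat i = 2)
    (F : ℕ → Finset ℕ) (hF1 : F 1 = {1}) (hF2 : F 2 = {2}) (hF0 : F 0 = {1, 2})
    (nid : ℕ) (hnid : nid = (univ.filter fun i => Yhat i = 0).card)
    (hsel : 0 < (univ.filter fun i => Yhat i ≠ 0).card)
    (α : ℝ)
    (hα : α = ((univ.filter fun i => Yhat i ≠ 0 ∧ Yhat i ≠ Y i).card : ℝ) /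
      ((univ.filter fun i => Yhat i ≠ 0).card : ℝ)) :
    ((univ.filter fun i => Y i ∉ F (Yhat i)).card : ℝ) / n =
      (((n : ℝ) - (nid : ℝ)) * α) / n := by
  have hsets : (univ.filter fun i => Y i ∉ F (Yhat i)) =
      (univ.filter fun i => Yhat i ≠ 0 ∧ Yhat i ≠ Y i) := by
    apply Finset.filter_congr
    intro i _
    rcases hYhat i with h | h | h <;> rw [h] <;> simp [hF0, hF1, hF2]
    · rcases hY i with h' | h' <;> simp [h']
    · rcases hY i with h' | h' <;> simp [h']
    · rcases hY i with h' | h' <;> simp [h']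
  have hcompl : (univ.filter fun i => Yhat i ≠ 0).card + nid = n := by
    rw [hnid]
    have := Finset.card_filter_add_card_filter_not (s := (univ : Finset (Fin n))) (p := fun i => Yhat i ≠ 0)
    simpa using this
  have hA : ((n : ℝ) - (nid : ℝ)) = ((univ.filter fun i => Yhat i ≠ 0).card : ℝ) := by
    have := hcompl
    push_cast [← this]
    ring
  have hAne : ((univ.filter fun i => Yhat i ≠ 0).card : ℝ) ≠ 0 := by
    exact_mod_cast hsel.ne'
  rw [hsets, hα, hA]
  field_simp
end
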